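/- Let D > 0 with −D ≡ 1 (mod 24), let d | 6 and r ∈ {1,5,7,11}. Then the map Q ↦ W_d Q is a bijection from Q^{(r)}_{−D} onto Q^{(r')}_{−D}, where r' is the residue class mod 12 determined by r' ≡ (2dμ(d) − 1) r (mod 12) and μ is the Möbius function. -/
import Mathlib


open Complex Real BigOperators MatrixGroups Filter

noncomputable section

/-- The action of a determinant-one matrix `g = (α β; γ δ)` on a binary quadratic form
`Q = [a,b,c]`, i.e. `(gQ)(x,y) = Q(δx - βy, -γx + αy)`, written on coefficient triples. -/
def formActQ (M : Matrix (Fin 2) (Fin 2) ℚ) (q : ℚ × ℚ × ℚ) : ℚ × ℚ × ℚ :=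
  (q.1 * M 1 1 ^ 2 - q.2.1 * M 1 0 * M 1 1 + q.2.2 * M 1 0 ^ 2,
   -2 * q.1 * M 0 1 * M 1 1 + q.2.1 * (M 0 0 * M 1 1 + M 0 1 * M 1 0) - 2 * q.2.2 * M 0 0 * M 1 0,
   q.1 * M 0 1 ^ 2 - q.2.1 * M 0 0 * M 0 1 + q.2.2 * M 0 0 ^ 2)

/-- The same action for integral matrices acting on integral coefficient triples. -/
def formActZ (M : Matrix (Fin 2) (Fin 2) ℤ) (q : ℤ × ℤ × ℤ) : ℤ × ℤ × ℤ :=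
  (q.1 * M 1 1 ^ 2 - q.2.1 * M 1 0 * M 1 1 + q.2.2 * M 1 0 ^ 2,
   -2 * q.1 * M 0 1 * M 1 1 + q.2.1 * (M 0 0 * M 1 1 + M 0 1 * M 1 0) - 2 * q.2.2 * M 0 0 * M 1 0,
   q.1 * M 0 1 ^ 2 - q.2.1 * M 0 0 * M 0 1 + q.2.2 * M 0 0 ^ 2)

/-- Coefficient triples, cast from `ℤ` to `ℚ`. -/
def castF (q : ℤ × ℤ × ℤ) : ℚ × ℚ × ℚ := ((q.1 : ℚ), (q.2.1 : ℚ), (q.2.2 : ℚ))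

/-- Unscaled Atkin–Lehner matrices: `W_d = (1/√d) · WFmat d`. -/
def WFmat : ℕ → Matrix (Fin 2) (Fin 2) ℚ
  | 2 => !![2, -1; 6, -2]
  | 3 => !![3, 1; 6, 3]
  | 6 => !![0, -1; 6, 0]
  | _ => 1

/-- The action of the Atkin–Lehner involution `W_d` on forms: the action on coefficients is
quadratic in the matrix entries, so the normalizing factor `1/√d` contributes `1/d`. -/
def WAct (d : ℕ) (q : ℚ × ℚ × ℚ) : ℚ × ℚ × ℚ := ((d : ℚ))⁻¹ • formActQ (WFmat d) q

/-- The set `𝒬_{-D}^{(r)}` of forms `[a,b,c]` with `b² - 4ac = -D`, `6 ∣ a > 0`,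
`b ≡ r (mod 12)`. -/
def QDset (D : ℤ) (r : ℤ) : Set (ℤ × ℤ × ℤ) :=
  {q | q.2.1 ^ 2 - 4 * q.1 * q.2.2 = -D ∧ 0 < q.1 ∧ 6 ∣ q.1 ∧ q.2.1 ≡ r [ZMOD 12]}

/- ### Auxiliary material -/

/-- Inverse map for `WAct 3`: the action of the adjugate matrix, scaled by `1/3`. -/
def WAct3' (q : ℚ × ℚ × ℚ) : ℚ × ℚ × ℚ := ((3 : ℚ))⁻¹ • formActQ !![3, -1; -6, 3] q

lemma QDset_congr {D r r' : ℤ} (h : r ≡ r' [ZMOD 12]) : QDset D r = QDset D r' := by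
  ext q
  simp only [QDset, Set.mem_setOf_eq]
  exact and_congr_right fun _ => and_congr_right fun _ => and_congr_right fun _ =>
    ⟨fun hb => hb.trans h, fun hb => hb.trans h.symm⟩

lemma WAct2_invol (q : ℚ × ℚ × ℚ) : WAct 2 (WAct 2 q) = q := by
  obtain ⟨x, y, z⟩ := q
  simp only [WAct, WFmat, formActQ, Matrix.cons_val', Matrix.cons_val_zero, Matrix.cons_val_one,
    Matrix.head_cons, Matrix.empty_val', Matrix.cons_val_fin_one, Matrix.head_fin_const,
    Prod.smul_mk, smul_eq_mul, Prod.mk.injEq]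
  norm_num
  refine ⟨by ring, by ring, by ring⟩

lemma WAct6_invol (q : ℚ × ℚ × ℚ) : WAct 6 (WAct 6 q) = q := by
  obtain ⟨x, y, z⟩ := q
  simp only [WAct, WFmat, formActQ, Matrix.cons_val', Matrix.cons_val_zero, Matrix.cons_val_one,
    Matrix.head_cons, Matrix.empty_val', Matrix.cons_val_fin_one, Matrix.head_fin_const,
    Prod.smul_mk, smul_eq_mul, Prod.mk.injEq]
  norm_num
  refine ⟨by ring, by ring, by ring⟩

lemma WAct3'_left (q : ℚ × ℚ × ℚ) : WAct3' (WAct 3 q) = q := by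
  obtain ⟨x, y, z⟩ := q
  simp only [WAct, WAct3', WFmat, formActQ, Matrix.cons_val', Matrix.cons_val_zero,
    Matrix.cons_val_one, Matrix.head_cons, Matrix.empty_val', Matrix.cons_val_fin_one,
    Matrix.head_fin_const, Prod.smul_mk, smul_eq_mul, Prod.mk.injEq]
  norm_num
  refine ⟨by ring, by ring, by ring⟩

lemma WAct3'_right (q : ℚ × ℚ × ℚ) : WAct 3 (WAct3' q) = q := by
  obtain ⟨x, y, z⟩ := q
  simp only [WAct, WAct3', WFmat, formActQ, Matrix.cons_val', Matrix.cons_val_zero,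
    Matrix.cons_val_one, Matrix.head_cons, Matrix.empty_val', Matrix.cons_val_fin_one,
    Matrix.head_fin_const, Prod.smul_mk, smul_eq_mul, Prod.mk.injEq]
  norm_num
  refine ⟨by ring, by ring, by ring⟩

lemma mapsTo2 (D : ℤ) (hD : 0 < D) (s t : ℤ) (hst : 7 * s ≡ t [ZMOD 12]) :
    Set.MapsTo (WAct 2) (castF '' QDset D s) (castF '' QDset D t) := by
  rintro x ⟨⟨a, b, c⟩, ⟨hdisc, hpos, hdvd, hmod⟩, rfl⟩
  obtain ⟨k, rfl⟩ := hdvd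
  simp only at hdisc hpos hmod
  refine ⟨(12*k + 6*b + 18*c, -(12*k) - 5*b - 12*c, 3*k + b + 2*c),
    ⟨by linear_combination hdisc, ?_, ⟨2*k + b + 3*c, by ring⟩, ?_⟩, ?_⟩
  · show (0:ℤ) < 12*k + 6*b + 18*c
    nlinarith [sq_nonneg (24*k + 6*b), hD, hpos, hdisc]
  · show -(12*k) - 5*b - 12*c ≡ t [ZMOD 12]
    rw [Int.modEq_iff_dvd] at hmod hst ⊢
    omega
  · simp only [castF, WAct, WAct3', WFmat, formActQ, Prod.mk.injEq, Prod.smul_mk, smul_eq_mul,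
      Matrix.cons_val', Matrix.cons_val_zero, Matrix.cons_val_one, Matrix.head_cons,
      Matrix.empty_val', Matrix.cons_val_fin_one, Matrix.head_fin_const, Matrix.of_apply,
      Matrix.cons_val_one]
    norm_num
    push_cast
    refine ⟨by ring, by ring, by ring⟩

lemma mapsTo6 (D : ℤ) (hD : 0 < D) (s t : ℤ) (hst : -s ≡ t [ZMOD 12]) :
    Set.MapsTo (WAct 6) (castF '' QDset D s) (castF '' QDset D t) := by
  rintro x ⟨⟨a, b, c⟩, ⟨hdisc, hpos, hdvd, hmod⟩, rfl⟩
  obtain ⟨k, rfl⟩ := hdvd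
  simp only at hdisc hpos hmod
  refine ⟨(6*c, -b, k), ⟨by linear_combination hdisc, ?_, ⟨c, by ring⟩, ?_⟩, ?_⟩
  · show (0:ℤ) < 6*c
    nlinarith [sq_nonneg b, hD, hpos, hdisc]
  · show -b ≡ t [ZMOD 12]
    rw [Int.modEq_iff_dvd] at hmod hst ⊢
    omega
  · simp only [castF, WAct, WAct3', WFmat, formActQ, Prod.mk.injEq, Prod.smul_mk, smul_eq_mul,
      Matrix.cons_val', Matrix.cons_val_zero, Matrix.cons_val_one, Matrix.head_cons,
      Matrix.empty_val', Matrix.cons_val_fin_one, Matrix.head_fin_const, Matrix.of_apply,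
      Matrix.cons_val_one]
    norm_num
    push_cast
    refine ⟨by ring, by ring, by ring⟩

lemma mapsTo3 (D : ℤ) (hD : 0 < D) (s t : ℤ) (hst : 5 * s ≡ t [ZMOD 12]) :
    Set.MapsTo (WAct 3) (castF '' QDset D s) (castF '' QDset D t) := by
  rintro x ⟨⟨a, b, c⟩, ⟨hdisc, hpos, hdvd, hmod⟩, rfl⟩
  obtain ⟨k, rfl⟩ := hdvd
  simp only at hdisc hpos hmod
  refine ⟨(18*k - 6*b + 12*c, -(12*k) + 5*b - 12*c, 2*k - b + 3*c),
    ⟨by linear_combination hdisc, ?_, ⟨3*k - b + 2*c, by ring⟩, ?_⟩, ?_⟩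
  · show (0:ℤ) < 18*k - 6*b + 12*c
    nlinarith [sq_nonneg (6*k - b), hD, hpos, hdisc]
  · show -(12*k) + 5*b - 12*c ≡ t [ZMOD 12]
    rw [Int.modEq_iff_dvd] at hmod hst ⊢
    omega
  · simp only [castF, WAct, WAct3', WFmat, formActQ, Prod.mk.injEq, Prod.smul_mk, smul_eq_mul,
      Matrix.cons_val', Matrix.cons_val_zero, Matrix.cons_val_one, Matrix.head_cons,
      Matrix.empty_val', Matrix.cons_val_fin_one, Matrix.head_fin_const, Matrix.of_apply,
      Matrix.cons_val_one]
    norm_num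
    push_cast
    refine ⟨by ring, by ring, by ring⟩

lemma mapsTo3' (D : ℤ) (hD : 0 < D) (s t : ℤ) (hst : 5 * s ≡ t [ZMOD 12]) :
    Set.MapsTo WAct3' (castF '' QDset D s) (castF '' QDset D t) := by
  rintro x ⟨⟨a, b, c⟩, ⟨hdisc, hpos, hdvd, hmod⟩, rfl⟩
  obtain ⟨k, rfl⟩ := hdvd
  simp only at hdisc hpos hmod
  refine ⟨(18*k + 6*b + 12*c, 12*k + 5*b + 12*c, 2*k + b + 3*c),
    ⟨by linear_combination hdisc, ?_, ⟨3*k + b + 2*c, by ring⟩, ?_⟩, ?_⟩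
  · show (0:ℤ) < 18*k + 6*b + 12*c
    nlinarith [sq_nonneg (6*k + b), hD, hpos, hdisc]
  · show 12*k + 5*b + 12*c ≡ t [ZMOD 12]
    rw [Int.modEq_iff_dvd] at hmod hst ⊢
    omega
  · simp only [castF, WAct, WAct3', WFmat, formActQ, Prod.mk.injEq, Prod.smul_mk, smul_eq_mul,
      Matrix.cons_val', Matrix.cons_val_zero, Matrix.cons_val_one, Matrix.head_cons,
      Matrix.empty_val', Matrix.cons_val_fin_one, Matrix.head_fin_const, Matrix.of_apply,
      Matrix.cons_val_one]
    norm_num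
    push_cast
    refine ⟨by ring, by ring, by ring⟩

lemma moebius_two : (ArithmeticFunction.moebius 2 : ℤ) = -1 :=
  ArithmeticFunction.moebius_apply_prime Nat.prime_two

lemma moebius_three : (ArithmeticFunction.moebius 3 : ℤ) = -1 :=
  ArithmeticFunction.moebius_apply_prime Nat.prime_three

lemma moebius_six : (ArithmeticFunction.moebius 6 : ℤ) = 1 := by
  have h := ArithmeticFunction.isMultiplicative_moebius.map_mul_of_coprime
    (m := 2) (n := 3) (by norm_num)
  norm_num at h
  rw [h, moebius_two, moebius_three]
  norm_num

/-- **Atkin–Lehner bijection on classes of forms.** For `D > 0` with `-D ≡ 1 (mod 24)`,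
`d ∣ 6` and `r ∈ {1,5,7,11}`, the map `Q ↦ W_d Q` is a bijection
`𝒬^{(r)}_{-D} ↔ 𝒬^{(r')}_{-D}` where `r' ≡ (2dμ(d) - 1) r (mod 12)`. -/
theorem WAct_bijOn (D : ℤ) (hD : 0 < D) (hD24 : -D ≡ 1 [ZMOD 24])
    (d : ℕ) (hd : d ∣ 6) (r r' : ℤ) (hr : r ∈ ({1, 5, 7, 11} : Set ℤ))
    (hr' : r' ≡ (2 * (d : ℤ) * (ArithmeticFunction.moebius d : ℤ) - 1) * r [ZMOD 12]) :
    Set.BijOn (WAct d) (castF '' QDset D r) (castF '' QDset D r') := by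
  have hub : d ≤ 6 := Nat.le_of_dvd (by norm_num) hd
  have hlb : 0 < d := Nat.pos_of_dvd_of_pos hd (by norm_num)
  interval_cases d
  · -- d = 1
    simp only [ArithmeticFunction.moebius_apply_one] at hr'
    have hrr : r ≡ r' [ZMOD 12] := by
      rw [Int.modEq_iff_dvd] at hr' ⊢
      push_cast at hr'
      omega
    have hW : WAct 1 = id := by
      funext q
      obtain ⟨x, y, z⟩ := q
      simp [WAct, WFmat, formActQ, Matrix.one_apply]
    rw [hW, ← QDset_congr (D := D) hrr]
    exact Set.bijOn_id _
  · -- d = 2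
    rw [moebius_two] at hr'
    have h1 : 7 * r ≡ r' [ZMOD 12] := by
      rw [Int.modEq_iff_dvd] at hr' ⊢
      push_cast at hr'
      omega
    have h2 : 7 * r' ≡ r [ZMOD 12] := by
      rw [Int.modEq_iff_dvd] at hr' ⊢
      push_cast at hr'
      omega
    exact Set.InvOn.bijOn ⟨fun q _ => WAct2_invol q, fun q _ => WAct2_invol q⟩
      (mapsTo2 D hD r r' h1) (mapsTo2 D hD r' r h2)
  · -- d = 3
    rw [moebius_three] at hr'
    have h1 : 5 * r ≡ r' [ZMOD 12] := by
      rw [Int.modEq_iff_dvd] at hr' ⊢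
      push_cast at hr'
      omega
    have h2 : 5 * r' ≡ r [ZMOD 12] := by
      rw [Int.modEq_iff_dvd] at hr' ⊢
      push_cast at hr'
      omega
    exact Set.InvOn.bijOn ⟨fun q _ => WAct3'_left q, fun q _ => WAct3'_right q⟩
      (mapsTo3 D hD r r' h1) (mapsTo3' D hD r' r h2)
  · -- d = 4, impossible
    exact absurd hd (by norm_num)
  · -- d = 5, impossible
    exact absurd hd (by norm_num)
  · -- d = 6
    rw [moebius_six] at hr'
    have h1 : -r ≡ r' [ZMOD 12] := by
      rw [Int.modEq_iff_dvd] at hr' ⊢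
      push_cast at hr'
      omega
    have h2 : -r' ≡ r [ZMOD 12] := by
      rw [Int.modEq_iff_dvd] at hr' ⊢
      push_cast at hr'
      omega
    exact Set.InvOn.bijOn ⟨fun q _ => WAct6_invol q, fun q _ => WAct6_invol q⟩
      (mapsTo6 D hD r r' h1) (mapsTo6 D hD r' r h2)

end
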